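/- arXiv:2504.09035 — 5 statements merged into one kernel-verified Lean document; each statement's English description precedes it below -/
import Mathlib

section
/- For every x ∈ ℝⁿ, the function u ↦ xᵀQx + uᵀRu + γ·(Ax + Bu)ᵀP(Ax + Bu) on ℝᵐ attains its minimum value xᵀPx uniquely at u* = −Kx; that is, the value at u* equals xᵀPx, and for every u ≠ −Kx the value is strictly greater than xᵀPx. -/
open Matrix

/-- Moving a matrix across a dot product via transpose. -/
private lemma dot_mulVec_transpose {k l : Type*} [Fintype k] [Fintype l]
    (M : Matrix k l ℝ) (y : k → ℝ) (w : l → ℝ) :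
    y ⬝ᵥ (M *ᵥ w) = (Mᵀ *ᵥ y) ⬝ᵥ w := by
  rw [Matrix.dotProduct_mulVec, ← Matrix.mulVec_transpose]

/-- For every `x`, the one-step cost `u ↦ xᵀQx + uᵀRu + γ(Ax+Bu)ᵀP(Ax+Bu)` attains
its minimum value `xᵀPx` uniquely at `u* = -Kx`. -/
theorem one_step_cost_min
    (n m : ℕ) (hn : 0 < n) (hm : 0 < m)
    (A : Matrix (Fin n) (Fin n) ℝ) (B : Matrix (Fin n) (Fin m) ℝ)
    (Q : Matrix (Fin n) (Fin n) ℝ) (hQ : Q.PosSemidef)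
    (R : Matrix (Fin m) (Fin m) ℝ) (hR : R.PosDef)
    (γ : ℝ) (hγ0 : 0 < γ) (hγ1 : γ ≤ 1)
    (P : Matrix (Fin n) (Fin n) ℝ) (hP : P.PosSemidef)
    (Rhat : Matrix (Fin m) (Fin m) ℝ)
    (hRhat : Rhat = R + γ • (Bᵀ * P * B))
    (hRhatPD : Rhat.PosDef)
    (hRic : P = γ • (Aᵀ * P * A)
        - (γ ^ 2) • (Aᵀ * P * B * Rhat⁻¹ * (Bᵀ * P * A)) + Q)
    (K : Matrix (Fin m) (Fin n) ℝ)
    (hK : K = γ • (Rhat⁻¹ * (Bᵀ * P * A)))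
    (x : Fin n → ℝ) :
    (x ⬝ᵥ Q *ᵥ x + (-(K *ᵥ x)) ⬝ᵥ R *ᵥ (-(K *ᵥ x))
        + γ * ((A *ᵥ x + B *ᵥ (-(K *ᵥ x))) ⬝ᵥ P *ᵥ (A *ᵥ x + B *ᵥ (-(K *ᵥ x))))
      = x ⬝ᵥ P *ᵥ x)
    ∧ ∀ u : Fin m → ℝ, u ≠ -(K *ᵥ x) →
        x ⬝ᵥ P *ᵥ x
          < x ⬝ᵥ Q *ᵥ x + u ⬝ᵥ R *ᵥ u
            + γ * ((A *ᵥ x + B *ᵥ u) ⬝ᵥ P *ᵥ (A *ᵥ x + B *ᵥ u)) := by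
  have hPsymm : Pᵀ = P := by
    have := hP.1.eq; rwa [Matrix.conjTranspose_eq_transpose_of_trivial] at this
  have hRhsymm : Rhatᵀ = Rhat := by
    have := hRhatPD.1.eq; rwa [Matrix.conjTranspose_eq_transpose_of_trivial] at this
  have hdet : IsUnit Rhat.det := hRhatPD.det_pos.ne'.isUnit
  have hRhinv : Rhat * Rhat⁻¹ = 1 := Matrix.mul_nonsing_inv _ hdet
  have hinvRh : Rhat⁻¹ * Rhat = 1 := Matrix.nonsing_inv_mul _ hdet
  have hinvsymm : (Rhat⁻¹)ᵀ = Rhat⁻¹ := by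
    rw [Matrix.transpose_nonsing_inv, hRhsymm]
  have psym : ∀ (y z : Fin n → ℝ), y ⬝ᵥ P *ᵥ z = z ⬝ᵥ P *ᵥ y := by
    intro y z
    rw [dot_mulVec_transpose, hPsymm, dotProduct_comm]
  have rsym : ∀ (y z : Fin m → ℝ), y ⬝ᵥ Rhat *ᵥ z = z ⬝ᵥ Rhat *ᵥ y := by
    intro y z
    rw [dot_mulVec_transpose, hRhsymm, dotProduct_comm]
  -- Rhat * K = γ • (Bᵀ P A)
  have hRK : Rhat * K = γ • (Bᵀ * P * A) := by
    rw [hK, Matrix.mul_smul, ← Matrix.mul_assoc, hRhinv, Matrix.one_mul]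
  -- Kᵀ Rhat K = γ² AᵀPB Rhat⁻¹ BᵀPA
  have hKT : Kᵀ = γ • (Aᵀ * P * B * Rhat⁻¹) := by
    rw [hK, Matrix.transpose_smul, Matrix.transpose_mul, hinvsymm,
      Matrix.transpose_mul, Matrix.transpose_mul, Matrix.transpose_transpose, hPsymm]
    simp [Matrix.mul_assoc]
  have hKRK : Kᵀ * (Rhat * K) = (γ ^ 2) • (Aᵀ * P * B * Rhat⁻¹ * (Bᵀ * P * A)) := by
    rw [hKT, hRK, Matrix.smul_mul, Matrix.mul_smul, smul_smul]
    ring_nf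
  -- the scalar version of the cross-term identity
  have hcross : ∀ u : Fin m → ℝ,
      u ⬝ᵥ Rhat *ᵥ (K *ᵥ x) = γ * ((B *ᵥ u) ⬝ᵥ P *ᵥ (A *ᵥ x)) := by
    intro u
    rw [Matrix.mulVec_mulVec, hRK, Matrix.smul_mulVec, dotProduct_smul,
      ← Matrix.mulVec_mulVec, ← Matrix.mulVec_mulVec, dot_mulVec_transpose,
      Matrix.transpose_transpose]
    rfl
  -- the quadratic K-term identity
  have hKxRKx : (K *ᵥ x) ⬝ᵥ Rhat *ᵥ (K *ᵥ x)
      = (γ ^ 2) * (x ⬝ᵥ (Aᵀ * P * B * Rhat⁻¹ * (Bᵀ * P * A)) *ᵥ x) := by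
    have h1 : x ⬝ᵥ (Kᵀ * (Rhat * K)) *ᵥ x = (K *ᵥ x) ⬝ᵥ Rhat *ᵥ (K *ᵥ x) := by
      rw [← Matrix.mulVec_mulVec, dot_mulVec_transpose, Matrix.transpose_transpose,
        ← Matrix.mulVec_mulVec]
    rw [← h1, hKRK, Matrix.smul_mulVec, dotProduct_smul, smul_eq_mul]
  -- xᵀPx via the Riccati equation
  have hxPx : x ⬝ᵥ P *ᵥ x
      = γ * ((A *ᵥ x) ⬝ᵥ P *ᵥ (A *ᵥ x)) - (K *ᵥ x) ⬝ᵥ Rhat *ᵥ (K *ᵥ x) + x ⬝ᵥ Q *ᵥ x := by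
    conv_lhs => rw [hRic]
    rw [Matrix.add_mulVec, Matrix.sub_mulVec, Matrix.smul_mulVec,
      Matrix.smul_mulVec, dotProduct_add, dotProduct_sub, dotProduct_smul,
      dotProduct_smul, hKxRKx]
    have hAA : x ⬝ᵥ (Aᵀ * P * A) *ᵥ x = (A *ᵥ x) ⬝ᵥ P *ᵥ (A *ᵥ x) := by
      rw [Matrix.mul_assoc, ← Matrix.mulVec_mulVec, dot_mulVec_transpose,
        Matrix.transpose_transpose, Matrix.mulVec_mulVec]
    rw [hAA]
    simp only [smul_eq_mul]
  -- uᵀ Rhat u expansion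
  have hRhu : ∀ u : Fin m → ℝ,
      u ⬝ᵥ Rhat *ᵥ u = u ⬝ᵥ R *ᵥ u + γ * ((B *ᵥ u) ⬝ᵥ P *ᵥ (B *ᵥ u)) := by
    intro u
    rw [hRhat, Matrix.add_mulVec, dotProduct_add, Matrix.smul_mulVec, dotProduct_smul]
    congr 1
    rw [Matrix.mul_assoc, ← Matrix.mulVec_mulVec, dot_mulVec_transpose,
      Matrix.transpose_transpose, Matrix.mulVec_mulVec]
    rfl
  -- the key completion-of-squares identity
  have main : ∀ u : Fin m → ℝ,
      x ⬝ᵥ Q *ᵥ x + u ⬝ᵥ R *ᵥ u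
        + γ * ((A *ᵥ x + B *ᵥ u) ⬝ᵥ P *ᵥ (A *ᵥ x + B *ᵥ u))
      = x ⬝ᵥ P *ᵥ x + (u + K *ᵥ x) ⬝ᵥ Rhat *ᵥ (u + K *ᵥ x) := by
    intro u
    have e1 : (A *ᵥ x + B *ᵥ u) ⬝ᵥ P *ᵥ (A *ᵥ x + B *ᵥ u)
        = (A *ᵥ x) ⬝ᵥ P *ᵥ (A *ᵥ x) + 2 * ((B *ᵥ u) ⬝ᵥ P *ᵥ (A *ᵥ x))
          + (B *ᵥ u) ⬝ᵥ P *ᵥ (B *ᵥ u) := by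
      rw [Matrix.mulVec_add, dotProduct_add, add_dotProduct, add_dotProduct,
        psym (A *ᵥ x) (B *ᵥ u)]
      ring
    have e2 : (u + K *ᵥ x) ⬝ᵥ Rhat *ᵥ (u + K *ᵥ x)
        = u ⬝ᵥ Rhat *ᵥ u + 2 * (u ⬝ᵥ Rhat *ᵥ (K *ᵥ x))
          + (K *ᵥ x) ⬝ᵥ Rhat *ᵥ (K *ᵥ x) := by
      rw [Matrix.mulVec_add, dotProduct_add, add_dotProduct, add_dotProduct,
        rsym (K *ᵥ x) u]
      ring
    rw [e1, e2, hRhu, hcross, hxPx]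
    ring
  constructor
  · have := main (-(K *ᵥ x))
    rw [this]
    simp
  · intro u hu
    rw [main u]
    have hv : u + K *ᵥ x ≠ 0 := by
      intro h
      apply hu
      have := congrArg (· - K *ᵥ x) h
      simpa [sub_eq_iff_eq_add, neg_eq_iff_add_eq_zero] using this
    have hpos : 0 < (u + K *ᵥ x) ⬝ᵥ Rhat *ᵥ (u + K *ᵥ x) := by
      have := hRhatPD.dotProduct_mulVec_pos hv
      simpa using this
    linarith
end

section
/- Let x : ℕ → ℝⁿ and u : ℕ → ℝᵐ be sequences satisfying the noise-free dynamics x_{k+1} = A x_k + B u_k for all k, and suppose γᵀ x_TᵀPx_T → 0 as T → ∞ and the series ∑_{k=0}^{∞} γᵏ (x_kᵀQx_k + u_kᵀRu_k) converges. Then ∑_{k=0}^{∞} γᵏ (x_kᵀQx_k + u_kᵀRu_k) = x₀ᵀPx₀ + ∑_{k=0}^{∞} γᵏ (u_k + Kx_k)ᵀ R̂ (u_k + Kx_k); in particular the total discounted cost is at least x₀ᵀPx₀, with equality if and only if u_k = −K x_k for all k. -/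
open Matrix Filter

lemma mulVec_dot {n N : ℕ} (M : Matrix (Fin n) (Fin N) ℝ) (v : Fin n → ℝ) (w : Fin N → ℝ) :
    (M *ᵥ w) ⬝ᵥ v = w ⬝ᵥ (Mᵀ *ᵥ v) := by
  rw [dotProduct_comm, dotProduct_mulVec, mulVec_transpose, dotProduct_comm]

lemma pointwise (n m : ℕ)
    (A : Matrix (Fin n) (Fin n) ℝ) (B : Matrix (Fin n) (Fin m) ℝ)
    (Q : Matrix (Fin n) (Fin n) ℝ)
    (R : Matrix (Fin m) (Fin m) ℝ)
    (γ : ℝ)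
    (P : Matrix (Fin n) (Fin n) ℝ) (hP : P.PosSemidef)
    (Rhat : Matrix (Fin m) (Fin m) ℝ)
    (hRhat : Rhat = R + γ • (Bᵀ * P * B))
    (hRhatPD : Rhat.PosDef)
    (hRic : P = γ • (Aᵀ * P * A)
        - (γ ^ 2) • (Aᵀ * P * B * Rhat⁻¹ * (Bᵀ * P * A)) + Q)
    (K : Matrix (Fin m) (Fin n) ℝ)
    (hK : K = γ • (Rhat⁻¹ * (Bᵀ * P * A)))
    (s : Fin n → ℝ) (v : Fin m → ℝ) :
    s ⬝ᵥ Q *ᵥ s + v ⬝ᵥ R *ᵥ v + γ * ((A *ᵥ s + B *ᵥ v) ⬝ᵥ P *ᵥ (A *ᵥ s + B *ᵥ v))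
      = s ⬝ᵥ P *ᵥ s + (v + K *ᵥ s) ⬝ᵥ Rhat *ᵥ (v + K *ᵥ s) := by
  have hPs : Pᵀ = P := hP.1.eq
  have hRs : Rhatᵀ = Rhat := hRhatPD.1.eq
  have hinv : Rhat * Rhat⁻¹ = 1 :=
    Matrix.mul_nonsing_inv _ (isUnit_iff_ne_zero.mpr (ne_of_gt hRhatPD.det_pos))
  have hinvT : (Rhat⁻¹)ᵀ = Rhat⁻¹ := by rw [Matrix.transpose_nonsing_inv, hRs]
  have hQeq : Q = P - (γ • (Aᵀ * P * A)
      - (γ ^ 2) • (Aᵀ * P * B * Rhat⁻¹ * (Bᵀ * P * A))) := by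
    rw [eq_sub_iff_add_eq, add_comm]; exact hRic.symm
  have h1 : Rhat * K = γ • (Bᵀ * (P * A)) := by
    rw [hK, Matrix.mul_smul, ← Matrix.mul_assoc, hinv, Matrix.one_mul, Matrix.mul_assoc]
  have hKT : Kᵀ = γ • (Aᵀ * P * B * Rhat⁻¹) := by
    rw [hK, Matrix.transpose_smul, Matrix.transpose_mul, hinvT]
    simp [Matrix.transpose_mul, hPs, Matrix.mul_assoc]
  have h3 : Kᵀ * Rhat = γ • (Aᵀ * (P * B)) := by
    rw [hKT, Matrix.smul_mul, Matrix.mul_assoc, Matrix.nonsing_inv_mul _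
      (isUnit_iff_ne_zero.mpr (ne_of_gt hRhatPD.det_pos)), Matrix.mul_one, Matrix.mul_assoc]
  have h2 : Kᵀ * (Rhat * K) = (γ ^ 2) • (Aᵀ * (P * (B * (Rhat⁻¹ * (Bᵀ * (P * A)))))) := by
    rw [h1, hKT, Matrix.smul_mul, Matrix.mul_smul, smul_smul, ← sq]
    simp [Matrix.mul_assoc]
  have h4 : Kᵀ * (Bᵀ * (P * A)) = γ • (Aᵀ * (P * (B * (Rhat⁻¹ * (Bᵀ * (P * A)))))) := by
    rw [hKT, Matrix.smul_mul]
    simp [Matrix.mul_assoc]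
  rw [hQeq]
  simp only [mulVec_add, add_mulVec, dotProduct_add, add_dotProduct, sub_mulVec,
    dotProduct_sub, sub_dotProduct, smul_mulVec, dotProduct_smul, smul_dotProduct,
    mulVec_dot, mulVec_mulVec, Matrix.mul_assoc, h1, h2, h3, h4, smul_eq_mul]
  nth_rewrite 2 [hRhat]
  simp only [add_mulVec, dotProduct_add, smul_mulVec, dotProduct_smul, smul_eq_mul,
    Matrix.mul_assoc]
  ring


/-- Infinite-horizon cost identity and lower bound for noise-free trajectories:
the total discounted cost equals `x₀ᵀPx₀` plus the discounted sum of completion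
terms; in particular it is at least `x₀ᵀPx₀`, with equality iff `u_k = -K x_k`
for all `k`. -/
theorem infinite_horizon_cost_identity
    (n m : ℕ) (hn : 0 < n) (hm : 0 < m)
    (A : Matrix (Fin n) (Fin n) ℝ) (B : Matrix (Fin n) (Fin m) ℝ)
    (Q : Matrix (Fin n) (Fin n) ℝ) (hQ : Q.PosSemidef)
    (R : Matrix (Fin m) (Fin m) ℝ) (hR : R.PosDef)
    (γ : ℝ) (hγ0 : 0 < γ) (hγ1 : γ ≤ 1)
    (P : Matrix (Fin n) (Fin n) ℝ) (hP : P.PosSemidef)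
    (Rhat : Matrix (Fin m) (Fin m) ℝ)
    (hRhat : Rhat = R + γ • (Bᵀ * P * B))
    (hRhatPD : Rhat.PosDef)
    (hRic : P = γ • (Aᵀ * P * A)
        - (γ ^ 2) • (Aᵀ * P * B * Rhat⁻¹ * (Bᵀ * P * A)) + Q)
    (K : Matrix (Fin m) (Fin n) ℝ)
    (hK : K = γ • (Rhat⁻¹ * (Bᵀ * P * A)))
    (x : ℕ → Fin n → ℝ) (u : ℕ → Fin m → ℝ)
    (hdyn : ∀ k, x (k + 1) = A *ᵥ x k + B *ᵥ u k)
    (htail : Tendsto (fun T : ℕ => γ ^ T * (x T ⬝ᵥ P *ᵥ x T)) atTop (nhds 0))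
    (hsum : Summable (fun k : ℕ =>
        γ ^ k * (x k ⬝ᵥ Q *ᵥ x k + u k ⬝ᵥ R *ᵥ u k))) :
    (∑' k : ℕ, γ ^ k * (x k ⬝ᵥ Q *ᵥ x k + u k ⬝ᵥ R *ᵥ u k)
        = x 0 ⬝ᵥ P *ᵥ x 0
          + ∑' k : ℕ, γ ^ k * ((u k + K *ᵥ x k) ⬝ᵥ Rhat *ᵥ (u k + K *ᵥ x k)))
    ∧ (x 0 ⬝ᵥ P *ᵥ x 0
        ≤ ∑' k : ℕ, γ ^ k * (x k ⬝ᵥ Q *ᵥ x k + u k ⬝ᵥ R *ᵥ u k))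
    ∧ ((∑' k : ℕ, γ ^ k * (x k ⬝ᵥ Q *ᵥ x k + u k ⬝ᵥ R *ᵥ u k)
          = x 0 ⬝ᵥ P *ᵥ x 0)
        ↔ ∀ k, u k = -(K *ᵥ x k)) := by
  have hcn : ∀ k, 0 ≤ γ ^ k * ((u k + K *ᵥ x k) ⬝ᵥ Rhat *ᵥ (u k + K *ᵥ x k)) := by
    intro k
    apply mul_nonneg (pow_nonneg hγ0.le k)
    have := hRhatPD.posSemidef.dotProduct_mulVec_nonneg (u k + K *ᵥ x k)
    simpa using this
  have key : ∀ k, γ ^ k * (x k ⬝ᵥ Q *ᵥ x k + u k ⬝ᵥ R *ᵥ u k)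
      = γ ^ k * (x k ⬝ᵥ P *ᵥ x k) - γ ^ (k+1) * (x (k+1) ⬝ᵥ P *ᵥ x (k+1))
        + γ ^ k * ((u k + K *ᵥ x k) ⬝ᵥ Rhat *ᵥ (u k + K *ᵥ x k)) := by
    intro k
    have hp := pointwise n m A B Q R γ P hP Rhat hRhat hRhatPD hRic K hK (x k) (u k)
    rw [hdyn k, pow_succ]
    linear_combination (γ ^ k) * hp
  have tel : ∀ T, ∑ k ∈ Finset.range T, γ ^ k * (x k ⬝ᵥ Q *ᵥ x k + u k ⬝ᵥ R *ᵥ u k)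
      = x 0 ⬝ᵥ P *ᵥ x 0 - γ ^ T * (x T ⬝ᵥ P *ᵥ x T)
        + ∑ k ∈ Finset.range T, γ ^ k * ((u k + K *ᵥ x k) ⬝ᵥ Rhat *ᵥ (u k + K *ᵥ x k)) := by
    intro T
    induction T with
    | zero => simp
    | succ T ih => rw [Finset.sum_range_succ, ih, key T, Finset.sum_range_succ]; ring
  have hTend : Tendsto (fun T => ∑ k ∈ Finset.range T,
      γ ^ k * (x k ⬝ᵥ Q *ᵥ x k + u k ⬝ᵥ R *ᵥ u k)) atTop
      (nhds (∑' k : ℕ, γ ^ k * (x k ⬝ᵥ Q *ᵥ x k + u k ⬝ᵥ R *ᵥ u k))) :=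
    hsum.hasSum.tendsto_sum_nat
  have hHasC : HasSum (fun k => γ ^ k * ((u k + K *ᵥ x k) ⬝ᵥ Rhat *ᵥ (u k + K *ᵥ x k)))
      ((∑' k : ℕ, γ ^ k * (x k ⬝ᵥ Q *ᵥ x k + u k ⬝ᵥ R *ᵥ u k)) - x 0 ⬝ᵥ P *ᵥ x 0) := by
    rw [hasSum_iff_tendsto_nat_of_nonneg hcn]
    have heq : (fun T => ∑ k ∈ Finset.range T,
        γ ^ k * ((u k + K *ᵥ x k) ⬝ᵥ Rhat *ᵥ (u k + K *ᵥ x k)))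
        = fun T => (∑ k ∈ Finset.range T, γ ^ k * (x k ⬝ᵥ Q *ᵥ x k + u k ⬝ᵥ R *ᵥ u k))
            - x 0 ⬝ᵥ P *ᵥ x 0 + γ ^ T * (x T ⬝ᵥ P *ᵥ x T) := by
      funext T; rw [tel T]; ring
    rw [heq]
    have := (hTend.sub (tendsto_const_nhds (x := x 0 ⬝ᵥ P *ᵥ x 0))).add htail
    simpa using this
  have hts := hHasC.tsum_eq
  have conj1 : ∑' k : ℕ, γ ^ k * (x k ⬝ᵥ Q *ᵥ x k + u k ⬝ᵥ R *ᵥ u k)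
      = x 0 ⬝ᵥ P *ᵥ x 0
        + ∑' k : ℕ, γ ^ k * ((u k + K *ᵥ x k) ⬝ᵥ Rhat *ᵥ (u k + K *ᵥ x k)) := by
    rw [hts]; ring
  have hcnn : 0 ≤ ∑' k : ℕ, γ ^ k * ((u k + K *ᵥ x k) ⬝ᵥ Rhat *ᵥ (u k + K *ᵥ x k)) :=
    tsum_nonneg hcn
  refine ⟨conj1, by linarith, ?_⟩
  constructor
  · intro h
    have h0 : HasSum (fun k => γ ^ k * ((u k + K *ᵥ x k) ⬝ᵥ Rhat *ᵥ (u k + K *ᵥ x k))) 0 := by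
      rw [h] at hHasC; simpa using hHasC
    have hz := (hasSum_zero_iff_of_nonneg hcn).1 h0
    intro k
    have hzk : γ ^ k * ((u k + K *ᵥ x k) ⬝ᵥ Rhat *ᵥ (u k + K *ᵥ x k)) = 0 := congrFun hz k
    have hq : (u k + K *ᵥ x k) ⬝ᵥ Rhat *ᵥ (u k + K *ᵥ x k) = 0 := by
      have hne : γ ^ k ≠ 0 := pow_ne_zero _ (ne_of_gt hγ0)
      exact (mul_eq_zero.1 hzk).resolve_left hne
    have hv : u k + K *ᵥ x k = 0 := by
      by_contra hne
      have := hRhatPD.dotProduct_mulVec_pos hne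
      simp only [star_trivial] at this
      linarith
    exact eq_neg_of_add_eq_zero_left hv
  · intro h
    have hz : ∀ k, γ ^ k * ((u k + K *ᵥ x k) ⬝ᵥ Rhat *ᵥ (u k + K *ᵥ x k)) = 0 := by
      intro k; simp [h k]
    rw [conj1, tsum_congr hz, tsum_zero, add_zero]
end

section
/- (Sufficient condition for not scheduling.) If e ∈ ℝⁿ satisfies eᵀAᵀΓA e < λ(1/γ − 1) − c, then γ ∫ V(Ae + w) dμ(w) < λ + γ V(0); that is, Q(e, 0) < Q(e, 1) where Q(e, 0) := ‖e‖²_Γ + γ ∫ V(Ae + w) dμ(w) and Q(e, 1) := ‖e‖²_Γ + λ + γ V(0), so not scheduling a communication is strictly optimal at the error state e. -/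
open Matrix MeasureTheory

/-- Sufficient condition for not scheduling: if `eᵀAᵀΓAe < λ(1/γ - 1) - c`, then
`Q(e,0) < Q(e,1)`, i.e. `γ ∫ V(Ae+w) dμ(w) < λ + γ V(0)`. -/
theorem no_schedule_sufficient
    (n : ℕ) (A : Matrix (Fin n) (Fin n) ℝ)
    (Γ : Matrix (Fin n) (Fin n) ℝ) (hΓ : Γ.PosSemidef)
    (lam γ : ℝ) (hlam : 0 < lam) (hγ0 : 0 < γ) (hγ1 : γ < 1)
    (μ : Measure (Fin n → ℝ)) [IsProbabilityMeasure μ]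
    (V : (Fin n → ℝ) → ℝ) (hVmeas : Measurable V) (hVnn : ∀ e, 0 ≤ V e)
    (hVint : ∀ e : Fin n → ℝ, Integrable (fun w => V (A *ᵥ e + w)) μ)
    (hBell : ∀ e : Fin n → ℝ,
      V e = e ⬝ᵥ Γ *ᵥ e
        + min (γ * ∫ w, V (A *ᵥ e + w) ∂μ) (lam + γ * V 0))
    (c : ℝ) (hc : 0 ≤ c)
    (hcov : ∀ e : Fin n → ℝ,
      (∫ w, (A *ᵥ e + w) ⬝ᵥ Γ *ᵥ (A *ᵥ e + w) ∂μ)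
        = e ⬝ᵥ (Aᵀ * Γ * A) *ᵥ e + c) :
    ∀ e : Fin n → ℝ,
      e ⬝ᵥ (Aᵀ * Γ * A) *ᵥ e < lam * (1 / γ - 1) - c →
        γ * ∫ w, V (A *ᵥ e + w) ∂μ < lam + γ * V 0 := by
  have hV0 : 0 ≤ V 0 := hVnn 0
  have hqnn : ∀ x : Fin n → ℝ, 0 ≤ x ⬝ᵥ Γ *ᵥ x := by
    intro x; simpa using hΓ.dotProduct_mulVec_nonneg x
  -- quadratic form lower bound on V
  have hquad_le_V : ∀ x : Fin n → ℝ, x ⬝ᵥ Γ *ᵥ x ≤ V x := by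
    intro x
    have hmin : 0 ≤ min (γ * ∫ w, V (A *ᵥ x + w) ∂μ) (lam + γ * V 0) := by
      apply le_min
      · exact mul_nonneg hγ0.le (integral_nonneg fun w => hVnn _)
      · nlinarith [mul_nonneg hγ0.le hV0]
    have := hBell x
    linarith
  have hV_le : ∀ x : Fin n → ℝ, V x ≤ x ⬝ᵥ Γ *ᵥ x + (lam + γ * V 0) := by
    intro x
    rw [hBell x]
    exact add_le_add le_rfl (min_le_right _ _)
  intro e hx
  set x := e ⬝ᵥ (Aᵀ * Γ * A) *ᵥ e with hxdef
  have hqmeas : Measurable (fun w : Fin n → ℝ => (A *ᵥ e + w) ⬝ᵥ Γ *ᵥ (A *ᵥ e + w)) := by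
    apply Measurable.comp (f := fun w : Fin n → ℝ => A *ᵥ e + w)
      (g := fun y : Fin n → ℝ => y ⬝ᵥ Γ *ᵥ y)
    · exact (continuous_id.dotProduct (continuous_const.matrix_mulVec continuous_id)).measurable
    · exact measurable_const.add measurable_id
  have hqint : Integrable (fun w => (A *ᵥ e + w) ⬝ᵥ Γ *ᵥ (A *ᵥ e + w)) μ := by
    refine (hVint e).mono hqmeas.aestronglyMeasurable ?_
    filter_upwards with w
    rw [Real.norm_eq_abs, Real.norm_eq_abs, abs_of_nonneg (hqnn _), abs_of_nonneg (hVnn _)]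
    exact hquad_le_V _
  have hIle : (∫ w, V (A *ᵥ e + w) ∂μ) ≤ x + c + (lam + γ * V 0) := by
    have h1 : (∫ w, V (A *ᵥ e + w) ∂μ)
        ≤ ∫ w, ((A *ᵥ e + w) ⬝ᵥ Γ *ᵥ (A *ᵥ e + w) + (lam + γ * V 0)) ∂μ := by
      apply integral_mono (hVint e) (hqint.add (integrable_const _))
      intro w; exact hV_le _
    rw [integral_add hqint (integrable_const _), hcov e, integral_const] at h1
    simpa using h1
  have hγinv : γ * (1 / γ) = 1 := by field_simp
  have h2 : γ * (∫ w, V (A *ᵥ e + w) ∂μ) ≤ γ * (x + c + (lam + γ * V 0)) :=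
    mul_le_mul_of_nonneg_left hIle hγ0.le
  have h3 : γ * x < γ * (lam * (1 / γ - 1) - c) := mul_lt_mul_of_pos_left hx hγ0
  nlinarith [h2, h3, hγinv, hV0,
    mul_nonneg (mul_nonneg hγ0.le (by linarith : (0:ℝ) ≤ 1 - γ)) hV0]
end

section
/- (Sufficient condition for scheduling.) If e ∈ ℝⁿ satisfies eᵀAᵀΓA e > λ/(γ(1 − γ)) − c, then γ ∫ V(Ae + w) dμ(w) > λ + γ V(0); that is, Q(e, 1) < Q(e, 0) where Q(e, 0) := ‖e‖²_Γ + γ ∫ V(Ae + w) dμ(w) and Q(e, 1) := ‖e‖²_Γ + λ + γ V(0), so scheduling a communication is strictly optimal at the error state e. -/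
open Matrix MeasureTheory

/-- Sufficient condition for scheduling: if `eᵀAᵀΓAe > λ/(γ(1-γ)) - c`, then
`Q(e,1) < Q(e,0)`, i.e. `γ ∫ V(Ae+w) dμ(w) > lam + γ V(0)`. -/
theorem schedule_sufficient
    (n : ℕ) (A : Matrix (Fin n) (Fin n) ℝ)
    (Γ : Matrix (Fin n) (Fin n) ℝ) (hΓ : Γ.PosSemidef)
    (lam γ : ℝ) (hlam : 0 < lam) (hγ0 : 0 < γ) (hγ1 : γ < 1)
    (μ : Measure (Fin n → ℝ)) [IsProbabilityMeasure μ]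
    (V : (Fin n → ℝ) → ℝ) (hVmeas : Measurable V) (hVnn : ∀ e, 0 ≤ V e)
    (hVint : ∀ e : Fin n → ℝ, Integrable (fun w => V (A *ᵥ e + w)) μ)
    (hBell : ∀ e : Fin n → ℝ,
      V e = e ⬝ᵥ Γ *ᵥ e
        + min (γ * ∫ w, V (A *ᵥ e + w) ∂μ) (lam + γ * V 0))
    (c : ℝ) (hc : 0 ≤ c)
    (hcov : ∀ e : Fin n → ℝ,
      (∫ w, (A *ᵥ e + w) ⬝ᵥ Γ *ᵥ (A *ᵥ e + w) ∂μ)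
        = e ⬝ᵥ (Aᵀ * Γ * A) *ᵥ e + c) :
    ∀ e : Fin n → ℝ,
      e ⬝ᵥ (Aᵀ * Γ * A) *ᵥ e > lam / (γ * (1 - γ)) - c →
        γ * ∫ w, V (A *ᵥ e + w) ∂μ > lam + γ * V 0 := by
  -- V dominates the quadratic form
  have hlow : ∀ x : Fin n → ℝ, x ⬝ᵥ Γ *ᵥ x ≤ V x := by
    intro x
    have h1 : 0 ≤ γ * ∫ w, V (A *ᵥ x + w) ∂μ :=
      mul_nonneg hγ0.le (integral_nonneg fun w => hVnn _)
    have h2 : 0 ≤ lam + γ * V 0 :=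
      add_nonneg hlam.le (mul_nonneg hγ0.le (hVnn 0))
    have := hBell x
    have : 0 ≤ min (γ * ∫ w, V (A *ᵥ x + w) ∂μ) (lam + γ * V 0) := le_min h1 h2
    linarith [hBell x]
  -- bound on V 0
  have hV0 : V 0 ≤ lam / (1 - γ) := by
    have h0 : (0 : Fin n → ℝ) ⬝ᵥ Γ *ᵥ (0 : Fin n → ℝ) = 0 := by simp
    have hb := hBell 0
    have hmin : min (γ * ∫ w, V (A *ᵥ (0 : Fin n → ℝ) + w) ∂μ) (lam + γ * V 0)
        ≤ lam + γ * V 0 := min_le_right _ _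
    have hle : V 0 ≤ lam + γ * V 0 := by
      nth_rewrite 1 [hb]; rw [h0]; linarith [hmin]
    rw [le_div_iff₀ (by linarith : (0:ℝ) < 1 - γ)]
    nlinarith
  intro e he
  -- integrability of the quadratic form
  have hqcont : Continuous (fun x : Fin n → ℝ => x ⬝ᵥ Γ *ᵥ x) := by
    simp only [dotProduct, mulVec]
    exact continuous_finset_sum _ fun i _ => (continuous_apply i).mul
      (continuous_finset_sum _ fun j _ => continuous_const.mul (continuous_apply j))
  have hqmeas : Measurable (fun w : Fin n → ℝ => (A *ᵥ e + w) ⬝ᵥ Γ *ᵥ (A *ᵥ e + w)) :=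
    (hqcont.comp (continuous_const.add continuous_id)).measurable
  have hqint : Integrable (fun w => (A *ᵥ e + w) ⬝ᵥ Γ *ᵥ (A *ᵥ e + w)) μ := by
    refine (hVint e).mono' hqmeas.aestronglyMeasurable ?_
    filter_upwards with w
    rw [Real.norm_eq_abs, abs_of_nonneg (by simpa using hΓ.dotProduct_mulVec_nonneg (A *ᵥ e + w))]
    exact hlow _
  have hmono : (∫ w, (A *ᵥ e + w) ⬝ᵥ Γ *ᵥ (A *ᵥ e + w) ∂μ)
      ≤ ∫ w, V (A *ᵥ e + w) ∂μ :=
    integral_mono hqint (hVint e) fun w => hlow _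
  rw [hcov e] at hmono
  have hγγ : 0 < γ * (1 - γ) := mul_pos hγ0 (by linarith)
  have key : lam / (γ * (1 - γ)) < e ⬝ᵥ (Aᵀ * Γ * A) *ᵥ e + c := by linarith
  have : lam / (1 - γ) < γ * (e ⬝ᵥ (Aᵀ * Γ * A) *ᵥ e + c) := by
    rw [div_lt_iff₀ (by linarith : (0:ℝ) < 1 - γ)]
    rw [div_lt_iff₀ hγγ] at key
    nlinarith
  have h1γ : (0:ℝ) < 1 - γ := by linarith
  have hV0m : V 0 * (1 - γ) ≤ lam := (le_div_iff₀ h1γ).mp hV0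
  have hfin : lam + γ * V 0 ≤ lam / (1 - γ) := by
    rw [le_div_iff₀ h1γ]
    nlinarith [mul_le_mul_of_nonneg_left hV0m hγ0.le]
  nlinarith [mul_le_mul_of_nonneg_left hmono hγ0.le]
end

section
/- (Always-schedule corollary.) If the scheduling cost satisfies λ ≤ γ(1 − γ)·c, then scheduling is optimal at every error state: for every e ∈ ℝⁿ, γ ∫ V(Ae + w) dμ(w) ≥ λ + γ V(0), i.e. Q(e, 1) ≤ Q(e, 0) where Q(e, 0) := ‖e‖²_Γ + γ ∫ V(Ae + w) dμ(w) and Q(e, 1) := ‖e‖²_Γ + λ + γ V(0). -/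
open Matrix MeasureTheory

/-- Always-schedule corollary: if `λ ≤ γ(1-γ)c`, then scheduling is optimal at
every error state, i.e. `Q(e,1) ≤ Q(e,0)` for all `e`. -/
theorem always_schedule
    (n : ℕ) (A : Matrix (Fin n) (Fin n) ℝ)
    (Γ : Matrix (Fin n) (Fin n) ℝ) (hΓ : Γ.PosSemidef)
    (lam γ : ℝ) (hlam : 0 < lam) (hγ0 : 0 < γ) (hγ1 : γ < 1)
    (μ : Measure (Fin n → ℝ)) [IsProbabilityMeasure μ]
    (V : (Fin n → ℝ) → ℝ) (hVmeas : Measurable V) (hVnn : ∀ e, 0 ≤ V e)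
    (hVint : ∀ e : Fin n → ℝ, Integrable (fun w => V (A *ᵥ e + w)) μ)
    (hBell : ∀ e : Fin n → ℝ,
      V e = e ⬝ᵥ Γ *ᵥ e
        + min (γ * ∫ w, V (A *ᵥ e + w) ∂μ) (lam + γ * V 0))
    (c : ℝ) (hc : 0 ≤ c)
    (hcov : ∀ e : Fin n → ℝ,
      (∫ w, (A *ᵥ e + w) ⬝ᵥ Γ *ᵥ (A *ᵥ e + w) ∂μ)
        = e ⬝ᵥ (Aᵀ * Γ * A) *ᵥ e + c)
    (hsmall : lam ≤ γ * (1 - γ) * c) :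
    ∀ e : Fin n → ℝ,
      lam + γ * V 0 ≤ γ * ∫ w, V (A *ᵥ e + w) ∂μ := by
  intro e
  -- quadratic form lower bound on V
  have hquad_nn : ∀ x : Fin n → ℝ, 0 ≤ x ⬝ᵥ Γ *ᵥ x := by
    intro x
    have := hΓ.dotProduct_mulVec_nonneg x
    simpa using this
  have hmin_nn : ∀ x : Fin n → ℝ,
      0 ≤ min (γ * ∫ w, V (A *ᵥ x + w) ∂μ) (lam + γ * V 0) := by
    intro x
    refine le_min ?_ ?_
    · exact mul_nonneg hγ0.le (integral_nonneg fun w => hVnn _)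
    · have := hVnn 0
      nlinarith
  have hVq : ∀ x : Fin n → ℝ, x ⬝ᵥ Γ *ᵥ x ≤ V x := by
    intro x
    rw [hBell x]
    linarith [hmin_nn x]
  -- bound on V 0
  have hV0 : (1 - γ) * V 0 ≤ lam := by
    have h0 := hBell 0
    have hq0 : (0 : Fin n → ℝ) ⬝ᵥ Γ *ᵥ (0 : Fin n → ℝ) = 0 := by simp
    have : V 0 ≤ lam + γ * V 0 := by
      nth_rewrite 1 [h0]
      rw [hq0, zero_add]
      exact min_le_right _ _
    nlinarith
  -- integrability of the quadratic function
  have hqmeas : Measurable fun w : Fin n → ℝ =>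
      (A *ᵥ e + w) ⬝ᵥ Γ *ᵥ (A *ᵥ e + w) := by
    simp only [dotProduct, Matrix.mulVec, Pi.add_apply]
    refine Finset.measurable_sum _ fun i _ => Measurable.mul ?_ ?_
    · exact measurable_const.add (measurable_pi_apply i)
    · exact Finset.measurable_sum _ fun j _ =>
        measurable_const.mul (measurable_const.add (measurable_pi_apply j))
  have hqint : Integrable (fun w : Fin n → ℝ =>
      (A *ᵥ e + w) ⬝ᵥ Γ *ᵥ (A *ᵥ e + w)) μ := by
    refine (hVint e).mono hqmeas.aestronglyMeasurable ?_
    filter_upwards with w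
    rw [Real.norm_eq_abs, Real.norm_eq_abs, abs_of_nonneg (hquad_nn _),
      abs_of_nonneg (hVnn _)]
    exact hVq _
  have hintle : (∫ w, (A *ᵥ e + w) ⬝ᵥ Γ *ᵥ (A *ᵥ e + w) ∂μ)
      ≤ ∫ w, V (A *ᵥ e + w) ∂μ :=
    integral_mono hqint (hVint e) fun w => hVq _
  have hform : e ⬝ᵥ (Aᵀ * Γ * A) *ᵥ e = (A *ᵥ e) ⬝ᵥ Γ *ᵥ (A *ᵥ e) := by
    rw [← Matrix.mulVec_mulVec, ← Matrix.mulVec_mulVec, dotProduct_mulVec,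
      Matrix.vecMul_transpose]
  have hcI : c ≤ ∫ w, V (A *ᵥ e + w) ∂μ := by
    have := hcov e
    have hnn := hquad_nn (A *ᵥ e)
    rw [this, hform] at hintle
    linarith
  nlinarith [mul_le_mul_of_nonneg_left hV0 hγ0.le,
    mul_le_mul_of_nonneg_left hcI hγ0.le, hγ0.le, hγ1]
end
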